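/- Let Λ, λ_w, λ_v > 0, K ≥ 2, p, q > 0 with p < q, and a(w), a(v) ≥ 0 satisfy Λ = λ_w^p + a(w) λ_w^q = λ_v^p + a(v) λ_v^q. Suppose |a(w) - a(v)| ≤ [a]_α (10 ρ_v)^α and 10 [a]_α ρ_v^α λ_v^q ≤ (K/4) λ_v^p, and likewise 10 [a]_α ρ_v^α λ_i^q ≤ (K/4) λ_i^p for i ∈ {v, w} whenever needed. Then K^{-1/p} λ_w ≤ λ_v ≤ K^{1/p} λ_w. -/
import Mathlib


set_option maxHeartbeats 1000000 in
lemma lambda_comparable_aux (p q K Λ lw lv aw av : ℝ)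
    (hp : 0 < p) (hpq : p < q) (hK : 2 ≤ K) (hΛ : 0 < Λ)
    (hlw : 0 < lw) (hlv : 0 < lv) (hav : 0 ≤ av)
    (hw : Λ = lw ^ p + aw * lw ^ q) (hv : Λ = lv ^ p + av * lv ^ q)
    (hawle : aw * lw ^ q ≤ av * lw ^ q + K / 4 * lw ^ p) :
    lv ≤ K ^ (1 / p) * lw := by
  by_contra h
  push_neg at h
  have hK0 : (0:ℝ) < K := by linarith
  have hA : (K ^ (1 / p) * lw) ^ p = K * lw ^ p := by
    rw [Real.mul_rpow (by positivity) hlw.le, ← Real.rpow_mul hK0.le,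
      one_div_mul_cancel hp.ne', Real.rpow_one]
  have f1 : K * lw ^ p < lv ^ p := by
    rw [← hA]
    exact Real.rpow_lt_rpow (by positivity) h hp
  have hA1 : (1:ℝ) ≤ K ^ (1 / p) := by
    have := Real.rpow_le_rpow (le_of_lt one_pos) (by linarith : (1:ℝ) ≤ K) (by positivity : (0:ℝ) ≤ 1/p)
    simpa using this
  have hlwv : lw ≤ lv := by nlinarith
  have hqp : (0:ℝ) ≤ q - p := by linarith
  have e1 : lw ^ q = lw ^ p * lw ^ (q - p) := by
    rw [← Real.rpow_add hlw]; congr 1; ring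
  have e2 : lv ^ q = lv ^ p * lv ^ (q - p) := by
    rw [← Real.rpow_add hlv]; congr 1; ring
  have hm : lw ^ (q - p) ≤ lv ^ (q - p) := Real.rpow_le_rpow hlw.le hlwv hqp
  have hWP : (0:ℝ) < lw ^ p := Real.rpow_pos_of_pos hlw p
  have hVP : (0:ℝ) < lv ^ p := Real.rpow_pos_of_pos hlv p
  have hWQ : (0:ℝ) < lw ^ q := Real.rpow_pos_of_pos hlw q
  have f2 : lw ^ q * lv ^ p ≤ lv ^ q * lw ^ p := by
    rw [e1, e2]
    nlinarith [mul_le_mul_of_nonneg_left hm (by positivity : (0:ℝ) ≤ lw ^ p * lv ^ p)]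
  have f2' : av * (lw ^ q * lv ^ p) ≤ av * (lv ^ q * lw ^ p) :=
    mul_le_mul_of_nonneg_left f2 hav
  have havq : av * lv ^ q = Λ - lv ^ p := by linarith
  have hΛVP : Λ * lv ^ p = lw ^ p * lv ^ p + aw * lw ^ q * lv ^ p := by
    rw [hw]; ring
  have hmul1 : aw * lw ^ q * lv ^ p ≤ av * lw ^ q * lv ^ p + K / 4 * lw ^ p * lv ^ p := by
    have := mul_le_mul_of_nonneg_right hawle hVP.le
    nlinarith [this]
  have step1 : Λ * lv ^ p ≤ lw ^ p * lv ^ p + av * (lw ^ q * lv ^ p) + K / 4 * lw ^ p * lv ^ p := by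
    nlinarith [hmul1]
  have eq2 : av * (lv ^ q * lw ^ p) = (Λ - lv ^ p) * lw ^ p := by
    rw [show av * (lv ^ q * lw ^ p) = av * lv ^ q * lw ^ p by ring, havq]
  have step2 : av * (lw ^ q * lv ^ p) ≤ (Λ - lv ^ p) * lw ^ p := by
    rw [← eq2]; exact f2'
  have hVPΛ : lv ^ p ≤ Λ := by nlinarith [mul_nonneg hav (Real.rpow_pos_of_pos hlv q).le]
  have c1 : Λ * lv ^ p ≤ Λ * lw ^ p + K / 4 * lw ^ p * lv ^ p := by nlinarith [step1, step2]
  have c2 : Λ * lw ^ p < Λ * lv ^ p / 2 := by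
    have h2 := mul_lt_mul_of_pos_left f1 hΛ
    nlinarith [mul_pos hΛ hWP]
  have c3 : K / 4 * lw ^ p * lv ^ p < Λ * lv ^ p / 4 := by
    have h3 := mul_lt_mul_of_pos_right f1 hVP
    nlinarith [mul_le_mul_of_nonneg_right hVPΛ hVP.le]
  have hpos : (0:ℝ) < Λ * lv ^ p := mul_pos hΛ hVP
  linarith

/-- Comparability of intrinsic scaling parameters (Vitali covering argument):
if `Λ = λ_w^p + a(w) λ_w^q = λ_v^p + a(v) λ_v^q`, `|a(w)-a(v)| ≤ [a]_α (10ρ_v)^α` and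
`10 [a]_α ρ_v^α λ_i^q ≤ (K/4) λ_i^p` for `i ∈ {v,w}`, then
`K^{-1/p} λ_w ≤ λ_v ≤ K^{1/p} λ_w`. -/
theorem lambda_comparable (p q K Λ lamw lamv aw av aα ρv α : ℝ)
    (hp : 0 < p) (hpq : p < q) (hK : 2 ≤ K)
    (hΛ : 0 < Λ) (hlamw : 0 < lamw) (hlamv : 0 < lamv)
    (haw : 0 ≤ aw) (hav : 0 ≤ av) (haα : 0 < aα) (hρv : 0 < ρv)
    (hα0 : 0 < α) (hα1 : α ≤ 1)
    (hw : Λ = lamw ^ p + aw * lamw ^ q)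
    (hv : Λ = lamv ^ p + av * lamv ^ q)
    (hhold : |aw - av| ≤ aα * (10 * ρv) ^ α)
    (hdecv : 10 * aα * ρv ^ α * lamv ^ q ≤ K / 4 * lamv ^ p)
    (hdecw : 10 * aα * ρv ^ α * lamw ^ q ≤ K / 4 * lamw ^ p) :
    K ^ (-(1 / p)) * lamw ≤ lamv ∧ lamv ≤ K ^ (1 / p) * lamw := by
  have hK0 : (0:ℝ) < K := by linarith
  have h10 : aα * (10 * ρv) ^ α ≤ 10 * aα * ρv ^ α := by
    have hmul : (10 * ρv : ℝ) ^ α = 10 ^ α * ρv ^ α :=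
      Real.mul_rpow (by norm_num) hρv.le
    have h10a : (10:ℝ) ^ α ≤ 10 := by
      have := Real.rpow_le_rpow_of_exponent_le (by norm_num : (1:ℝ) ≤ 10) hα1
      simpa using this
    have hρ : (0:ℝ) ≤ ρv ^ α := (Real.rpow_pos_of_pos hρv α).le
    rw [hmul]
    nlinarith [mul_le_mul_of_nonneg_left h10a (mul_nonneg haα.le hρ)]
  have habs := abs_le.mp hhold
  have hWQ : (0:ℝ) < lamw ^ q := Real.rpow_pos_of_pos hlamw q
  have hVQ : (0:ℝ) < lamv ^ q := Real.rpow_pos_of_pos hlamv q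
  have hawle : aw * lamw ^ q ≤ av * lamw ^ q + K / 4 * lamw ^ p := by
    have hle : aw ≤ av + 10 * aα * ρv ^ α := by linarith [habs.2]
    nlinarith [mul_le_mul_of_nonneg_right hle hWQ.le]
  have havle : av * lamv ^ q ≤ aw * lamv ^ q + K / 4 * lamv ^ p := by
    have hle : av ≤ aw + 10 * aα * ρv ^ α := by linarith [habs.1]
    nlinarith [mul_le_mul_of_nonneg_right hle hVQ.le]
  have h1 : lamv ≤ K ^ (1 / p) * lamw :=
    lambda_comparable_aux p q K Λ lamw lamv aw av hp hpq hK hΛ hlamw hlamv hav hw hv hawle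
  have h2 : lamw ≤ K ^ (1 / p) * lamv :=
    lambda_comparable_aux p q K Λ lamv lamw av aw hp hpq hK hΛ hlamv hlamw haw hv hw havle
  refine ⟨?_, h1⟩
  have hpos : (0:ℝ) < K ^ (-(1 / p)) := Real.rpow_pos_of_pos hK0 _
  have hmul : K ^ (-(1 / p)) * K ^ (1 / p) = 1 := by
    rw [← Real.rpow_add hK0]
    simp
  calc K ^ (-(1 / p)) * lamw ≤ K ^ (-(1 / p)) * (K ^ (1 / p) * lamv) :=
        mul_le_mul_of_nonneg_left h2 hpos.le
    _ = lamv := by rw [← mul_assoc, hmul, one_mul]
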